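/- Let C be a weak model category, p : X → Y a fibration between fibrant objects, and i : A → B a cofibration between cofibrant objects. Then p has the right lifting property against i if and only if p has the weak right lifting property against i. -/

import Mathlib

open CategoryTheory CategoryTheory.Limits

universe w v u

namespace WMC

variable {C : Type u} [Category.{v} C]

/-- An object is cofibrant when the map from the initial object is a cofibration. -/
def Cofibrant [HasInitial C] (Cof : MorphismProperty C) (X : C) : Prop :=
  Cof (initial.to X)

/-- An object is fibrant when the map to the terminal object is a fibration. -/
def Fibrant [HasTerminal C] (Fib : MorphismProperty C) (X : C) : Prop :=
  Fib (terminal.from X)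

/-- The axioms for a class of cofibrations. -/
structure IsCofClass [HasInitial C] (Cof : MorphismProperty C) : Prop where
  initial_cofibrant : Cofibrant Cof (⊥_ C)
  iso_mem : ∀ {X Y : C} (f : X ⟶ Y), IsIso f → Cofibrant Cof X → Cof f
  comp_mem : ∀ {X Y Z : C} (f : X ⟶ Y) (g : Y ⟶ Z), Cof f → Cof g → Cof (f ≫ g)
  pushout_mem : ∀ {A B X : C} (i : A ⟶ B) (f : A ⟶ X), Cof i → Cofibrant Cof A →
    Cofibrant Cof X →
    ∃ (P : C) (inl : X ⟶ P) (inr : B ⟶ P), IsPushout f i inl inr ∧ Cof inl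

/-- The axioms for a class of fibrations (a class of cofibrations on `Cᵒᵖ`). -/
structure IsFibClass [HasTerminal C] (Fib : MorphismProperty C) : Prop where
  terminal_fibrant : Fibrant Fib (⊤_ C)
  iso_mem : ∀ {X Y : C} (f : X ⟶ Y), IsIso f → Fibrant Fib Y → Fib f
  comp_mem : ∀ {X Y Z : C} (f : X ⟶ Y) (g : Y ⟶ Z), Fib f → Fib g → Fib (f ≫ g)
  pullback_mem : ∀ {A B X : C} (p : B ⟶ A) (f : X ⟶ A), Fib p → Fibrant Fib A →
    Fibrant Fib X →
    ∃ (P : C) (fst : P ⟶ X) (snd : P ⟶ B), IsPullback fst snd f p ∧ Fib fst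

variable [HasInitial C] [HasTerminal C]

/-- Acyclic fibration: a fibration with the right lifting property against all
cofibrations between cofibrant objects. -/
def IsAcyclicFib (Cof Fib : MorphismProperty C) {X Y : C} (p : X ⟶ Y) : Prop :=
  Fib p ∧ ∀ {A B : C} (i : A ⟶ B), Cof i → Cofibrant Cof A → Cofibrant Cof B →
    HasLiftingProperty i p

/-- Acyclic cofibration: a cofibration with the left lifting property against all
fibrations between fibrant objects. -/
def IsAcyclicCof (Cof Fib : MorphismProperty C) {A B : C} (i : A ⟶ B) : Prop :=
  Cof i ∧ ∀ {X Y : C} (p : X ⟶ Y), Fib p → Fibrant Fib X → Fibrant Fib Y →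
    HasLiftingProperty i p

/-- A relative strong cylinder object for a cofibration `i : A ⟶ B`: a factorization
`B ⊔_A B ⟶ I_A B ⟶ B` of the codiagonal, with the first map a cofibration whose
precomposition with the first coprojection is an acyclic cofibration. -/
structure RelStrongCylinder (Cof Fib : MorphismProperty C) {A B : C} (i : A ⟶ B) where
  BB : C
  in₀ : B ⟶ BB
  in₁ : B ⟶ BB
  isPushout : IsPushout i i in₀ in₁
  Cyl : C
  ι : BB ⟶ Cyl
  ρ : Cyl ⟶ B
  ι_cof : Cof ι
  in₀_ι_acyclic : IsAcyclicCof Cof Fib (in₀ ≫ ι)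
  fac₀ : in₀ ≫ ι ≫ ρ = 𝟙 B
  fac₁ : in₁ ≫ ι ≫ ρ = 𝟙 B

/-- A relative strong path object for a fibration `q : Y ⟶ X`: a factorization
`Y ⟶ P_X Y ⟶ Y ×_X Y` of the relative diagonal, with the second map a fibration whose
postcomposition with the first projection is an acyclic fibration. -/
structure RelStrongPath (Cof Fib : MorphismProperty C) {X Y : C} (q : Y ⟶ X) where
  YY : C
  pr₀ : YY ⟶ Y
  pr₁ : YY ⟶ Y
  isPullback : IsPullback pr₀ pr₁ q q
  Pth : C
  π : Pth ⟶ YY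
  σ : Y ⟶ Pth
  π_fib : Fib π
  π_pr₀_acyclic : IsAcyclicFib Cof Fib (π ≫ pr₀)
  fac₀ : σ ≫ π ≫ pr₀ = 𝟙 Y
  fac₁ : σ ≫ π ≫ pr₁ = 𝟙 Y

/-- A weak model category: a class of cofibrations and a class of fibrations satisfying
the factorization axiom, the cylinder axiom and the path object axiom. -/
structure IsWeakModel (Cof Fib : MorphismProperty C) : Prop where
  cofClass : IsCofClass Cof
  fibClass : IsFibClass Fib
  factor_cof_afib : ∀ {X Y : C} (f : X ⟶ Y), Cofibrant Cof X → Fibrant Fib Y →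
    ∃ (Z : C) (i : X ⟶ Z) (q : Z ⟶ Y), Cof i ∧ IsAcyclicFib Cof Fib q ∧ i ≫ q = f
  factor_acof_fib : ∀ {X Y : C} (f : X ⟶ Y), Cofibrant Cof X → Fibrant Fib Y →
    ∃ (Z : C) (i : X ⟶ Z) (q : Z ⟶ Y), IsAcyclicCof Cof Fib i ∧ Fib q ∧ i ≫ q = f
  cylinder : ∀ {A B : C} (i : A ⟶ B), Cof i → Cofibrant Cof A → Fibrant Fib B →
    Nonempty (RelStrongCylinder Cof Fib i)
  pathObj : ∀ {X Y : C} (q : Y ⟶ X), Fib q → Cofibrant Cof Y → Fibrant Fib X →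
    Nonempty (RelStrongPath Cof Fib q)

/-- A relative weak cylinder object for a cofibration `i : A ⟶ B`. -/
structure RelWeakCylinder (Cof Fib : MorphismProperty C) {A B : C} (i : A ⟶ B) where
  BB : C
  in₀ : B ⟶ BB
  in₁ : B ⟶ BB
  isPushout : IsPushout i i in₀ in₁
  Cyl : C
  D : C
  ι : BB ⟶ Cyl
  ρ : Cyl ⟶ D
  e : B ⟶ D
  ι_cof : Cof ι
  in₀_ι_acyclic : IsAcyclicCof Cof Fib (in₀ ≫ ι)
  e_acyclic : IsAcyclicCof Cof Fib e
  fac₀ : in₀ ≫ ι ≫ ρ = e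
  fac₁ : in₁ ≫ ι ≫ ρ = e

/-- The weak right lifting property of `f : X ⟶ Y` against a cofibration `i : A ⟶ B`:
every commutative square admits a filler `v` making the upper triangle commute and the
lower triangle commute up to a homotopy relative to `A`, i.e. the map
`(f ∘ v, y) : B ⊔_A B ⟶ Y` factors through `B ⊔_A B ⟶ I_A B` for some relative weak
cylinder object for `i`. -/
def WeakRLP (Cof Fib : MorphismProperty C) {X Y A B : C} (f : X ⟶ Y) (i : A ⟶ B) : Prop :=
  ∀ (x : A ⟶ X) (y : B ⟶ Y), x ≫ f = i ≫ y →
    ∃ v : B ⟶ X, i ≫ v = x ∧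
      ∃ (W : RelWeakCylinder Cof Fib i) (h : W.Cyl ⟶ Y),
        W.in₀ ≫ W.ι ≫ h = v ≫ f ∧ W.in₁ ≫ W.ι ≫ h = y

end WMC

/-!
A strict lift `v` yields a weak one with any relative weak cylinder object `W`: since `Y` is
fibrant, `v ≫ p` extends along the acyclic cofibration `W.e` to some `t`, and `W.ρ ≫ t` is the
homotopy. Such a `W` exists: for a fibrant replacement `e : B ⟶ D`, factor `(e, e) : B ⊔_A B ⟶ D`
as a cofibration `ι` followed by an acyclic fibration `ρ`. Then `in₀ ≫ ι` is acyclic by two out of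
three: a cofibration `j` with `j ≫ q` acyclic, `q` an acyclic fibration, is a retract of `j ≫ q`
up to homotopy relative to its source.

Conversely, lifting the homotopy `h` of a weak lift along the acyclic cofibration `in₀ ≫ ι`,
starting from `v`, and restricting to the other end `in₁ ≫ ι` gives a strict lift.
-/

namespace WMC

variable {C : Type u} [Category.{v} C]

theorem exists_lift_of_homotopy {A B Cyl X Y : C} {i : A ⟶ B} {j₀ j₁ : B ⟶ Cyl} {p : X ⟶ Y}
    [HasLiftingProperty j₀ p] (hj : i ≫ j₀ = i ≫ j₁) (v : B ⟶ X) (h : Cyl ⟶ Y)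
    (hv : j₀ ≫ h = v ≫ p) :
    ∃ w : B ⟶ X, i ≫ w = i ≫ v ∧ w ≫ p = j₁ ≫ h := by
  have sq : CommSq v j₀ p h := ⟨hv.symm⟩
  refine ⟨j₁ ≫ sq.lift, ?_, by simp⟩
  rw [← Category.assoc, ← hj, Category.assoc, sq.fac_left]

section Cofibrations

variable [HasInitial C] {Cof : MorphismProperty C}

theorem Cofibrant.of_cof (hC : IsCofClass Cof) {X Y : C} {f : X ⟶ Y} (hf : Cof f)
    (hX : Cofibrant Cof X) : Cofibrant Cof Y := by
  unfold Cofibrant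
  rw [initial.hom_ext (initial.to Y) (initial.to X ≫ f)]
  exact hC.comp_mem _ _ hX hf

theorem IsCofClass.cof_of_isPushout (hC : IsCofClass Cof) {A B X P : C} {f : A ⟶ X}
    {i : A ⟶ B} {inl : X ⟶ P} {inr : B ⟶ P} (h : IsPushout f i inl inr) (hi : Cof i)
    (hA : Cofibrant Cof A) (hX : Cofibrant Cof X) : Cof inl := by
  obtain ⟨P', inl', inr', h', hinl'⟩ := hC.pushout_mem i f hi hA hX
  rw [← h'.inl_isoIsPushout_hom _ _ h]
  exact hC.comp_mem _ _ hinl' (hC.iso_mem _ inferInstance (hX.of_cof hC hinl'))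

end Cofibrations

section Fibrations

variable [HasTerminal C] {Cof Fib : MorphismProperty C}

theorem Fibrant.of_fib (hF : IsFibClass Fib) {X Y : C} {f : X ⟶ Y} (hf : Fib f)
    (hY : Fibrant Fib Y) : Fibrant Fib X := by
  unfold Fibrant
  rw [terminal.hom_ext (terminal.from X) (f ≫ terminal.from Y)]
  exact hF.comp_mem _ _ hf hY

theorem IsAcyclicCof.exists_extension (hF : IsFibClass Fib) {B D Y : C} {e : B ⟶ D}
    (he : IsAcyclicCof Cof Fib e) (hY : Fibrant Fib Y) (f : B ⟶ Y) :
    ∃ t : D ⟶ Y, e ≫ t = f := by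
  have := he.2 (terminal.from Y) hY hY hF.terminal_fibrant
  have sq : CommSq f e (terminal.from Y) (terminal.from D) := ⟨terminal.hom_ext _ _⟩
  exact ⟨sq.lift, sq.fac_left⟩

theorem weakRLP_of_hasLiftingProperty (hF : IsFibClass Fib) {X Y A B : C} {p : X ⟶ Y}
    {i : A ⟶ B} [HasLiftingProperty i p] (hW : Nonempty (RelWeakCylinder Cof Fib i))
    (hY : Fibrant Fib Y) : WeakRLP Cof Fib p i := by
  intro x y hxy
  have sq : CommSq x i p y := ⟨hxy⟩
  obtain ⟨W⟩ := hW
  obtain ⟨t, ht⟩ := W.e_acyclic.exists_extension hF hY (sq.lift ≫ p)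
  refine ⟨sq.lift, sq.fac_left, W, W.ρ ≫ t, ?_, ?_⟩
  · rw [reassoc_of% W.fac₀, ht]
  · rw [reassoc_of% W.fac₁, ht, sq.fac_right]

theorem hasLiftingProperty_of_weakRLP {X Y A B : C} {p : X ⟶ Y} {i : A ⟶ B}
    (hp : Fib p) (hX : Fibrant Fib X) (hY : Fibrant Fib Y) (hw : WeakRLP Cof Fib p i) :
    HasLiftingProperty i p := by
  refine ⟨fun {u y} sq => ?_⟩
  obtain ⟨v, hv, W, h, h₀, h₁⟩ := hw u y sq.w
  have := W.in₀_ι_acyclic.2 p hp hX hY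
  obtain ⟨w, hw, hwp⟩ := exists_lift_of_homotopy (i := i) (p := p)
    (j₀ := W.in₀ ≫ W.ι) (j₁ := W.in₁ ≫ W.ι)
    (by simp [reassoc_of% W.isPushout.w]) v h (by simpa using h₀)
  exact ⟨⟨⟨w, hw.trans hv, hwp.trans (by simpa using h₁)⟩⟩⟩

end Fibrations

variable [HasInitial C] [HasTerminal C] {Cof Fib : MorphismProperty C}

theorem RelStrongCylinder.cofibrant_BB (hC : IsCofClass Cof) {B Z : C} {j : B ⟶ Z}
    (S : RelStrongCylinder Cof Fib j) (hj : Cof j) (hB : Cofibrant Cof B) :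
    Cofibrant Cof S.BB :=
  have hZ := hB.of_cof hC hj
  hZ.of_cof hC (hC.cof_of_isPushout S.isPushout hj hB hZ)

/-- A section `s` of the acyclic fibration `q` under `B` is a homotopy inverse of `q`
relative to `B`. -/
theorem RelStrongCylinder.exists_homotopy_of_section (hC : IsCofClass Cof) {B Z D : C}
    {j : B ⟶ Z} (S : RelStrongCylinder Cof Fib j) (hj : Cof j) (hB : Cofibrant Cof B)
    {q : Z ⟶ D} {s : D ⟶ Z} (hq : IsAcyclicFib Cof Fib q) (hs : (j ≫ q) ≫ s = j)
    (hsq : s ≫ q = 𝟙 D) :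
    ∃ H : S.Cyl ⟶ Z, S.in₀ ≫ S.ι ≫ H = q ≫ s ∧ S.in₁ ≫ S.ι ≫ H = 𝟙 Z := by
  have hBB := S.cofibrant_BB hC hj hB
  have := hq.2 S.ι S.ι_cof hBB (hBB.of_cof hC S.ι_cof)
  have sq : CommSq (S.isPushout.desc (q ≫ s) (𝟙 Z) (by simpa using hs)) S.ι q (S.ρ ≫ q) :=
    ⟨S.isPushout.hom_ext (by simp [hsq, reassoc_of% S.fac₀])
      (by simp [reassoc_of% S.fac₁])⟩
  exact ⟨sq.lift, by rw [sq.fac_left, IsPushout.inl_desc],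
    by rw [sq.fac_left, IsPushout.inr_desc]⟩

theorem IsWeakModel.isAcyclicCof_of_comp (hWM : IsWeakModel Cof Fib) {B Z D : C}
    {j : B ⟶ Z} {q : Z ⟶ D} (hj : Cof j) (hq : IsAcyclicFib Cof Fib q)
    (hjq : IsAcyclicCof Cof Fib (j ≫ q)) (hB : Cofibrant Cof B) (hZ : Fibrant Fib Z) :
    IsAcyclicCof Cof Fib j := by
  have := hq.2 _ hjq.1 hB (hB.of_cof hWM.cofClass hjq.1)
  have sq_s : CommSq j (j ≫ q) q (𝟙 D) := ⟨by simp⟩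
  obtain ⟨S⟩ := hWM.cylinder j hj hB hZ
  obtain ⟨H, hH₀, hH₁⟩ :=
    S.exists_homotopy_of_section hWM.cofClass hj hB hq sq_s.fac_left sq_s.fac_right
  refine ⟨hj, fun p hp hX hY => ⟨fun {u v} sq => ?_⟩⟩
  have := hjq.2 p hp hX hY
  have sq_m : CommSq u (j ≫ q) p (sq_s.lift ≫ v) :=
    ⟨by rw [sq.w, ← Category.assoc, sq_s.fac_left]⟩
  have := S.in₀_ι_acyclic.2 p hp hX hY
  obtain ⟨w, hw, hwp⟩ := exists_lift_of_homotopy (i := j) (p := p)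
    (j₀ := S.in₀ ≫ S.ι) (j₁ := S.in₁ ≫ S.ι)
    (by simp [reassoc_of% S.isPushout.w]) (q ≫ sq_m.lift) (H ≫ v)
    (by simp [reassoc_of% hH₀])
  refine ⟨⟨⟨w, ?_, ?_⟩⟩⟩
  · rw [hw, ← Category.assoc, sq_m.fac_left]
  · simp [hwp, reassoc_of% hH₁]

theorem IsWeakModel.nonempty_relWeakCylinder (hWM : IsWeakModel Cof Fib) {A B : C}
    {i : A ⟶ B} (hi : Cof i) (hA : Cofibrant Cof A) (hB : Cofibrant Cof B) :
    Nonempty (RelWeakCylinder Cof Fib i) := by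
  obtain ⟨D, e, r, he, hr, -⟩ :=
    hWM.factor_acof_fib (terminal.from B) hB hWM.fibClass.terminal_fibrant
  have hD : Fibrant Fib D := Fibrant.of_fib hWM.fibClass hr hWM.fibClass.terminal_fibrant
  obtain ⟨BB, in₀, in₁, hBB, hin₀⟩ := hWM.cofClass.pushout_mem i i hi hA hB
  obtain ⟨Cyl, ι, ρ, hι, hρ, hιρ⟩ :=
    hWM.factor_cof_afib (hBB.desc e e rfl) (hB.of_cof hWM.cofClass hin₀) hD
  have fac₀ : in₀ ≫ ι ≫ ρ = e := by rw [hιρ, hBB.inl_desc]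
  have fac₁ : in₁ ≫ ι ≫ ρ = e := by rw [hιρ, hBB.inr_desc]
  have acyclic : IsAcyclicCof Cof Fib (in₀ ≫ ι) :=
    hWM.isAcyclicCof_of_comp (hWM.cofClass.comp_mem _ _ hin₀ hι) hρ
      (by rwa [Category.assoc, fac₀]) hB (Fibrant.of_fib hWM.fibClass hρ.1 hD)
  exact ⟨⟨BB, in₀, in₁, hBB, Cyl, D, ι, ρ, e, hι, acyclic, he, fac₀, fac₁⟩⟩

/-- a fibration between fibrant objects has the right lifting property
against a cofibration between cofibrant objects iff it has the weak right lifting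
property against it. -/
theorem statement13 (Cof Fib : MorphismProperty C) (hWM : IsWeakModel Cof Fib)
    {X Y A B : C} (p : X ⟶ Y) (i : A ⟶ B)
    (hp : Fib p) (hX : Fibrant Fib X) (hY : Fibrant Fib Y)
    (hi : Cof i) (hA : Cofibrant Cof A) (hB : Cofibrant Cof B) :
    HasLiftingProperty i p ↔ WeakRLP Cof Fib p i :=
  ⟨fun _ => weakRLP_of_hasLiftingProperty hWM.fibClass (hWM.nonempty_relWeakCylinder hi hA hB) hY,
    hasLiftingProperty_of_weakRLP hp hX hY⟩

end WMC
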